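/- Let R = k[x,y,z]/(x²-y², y²-z²) over a field k with char k ≠ 2, and let t = (t₀,t₁) ∈ k² \ {0}. If A, B are scalar 2×2 matrices over k such that B · Φ_t⁺ = Φ_t⁺ · A as matrices over R (where Φ_t⁺ = [[t₁(x+y), y+z],[t₀(z-y), x-y]]), then A = B = c·I₂ for some c ∈ k. -/

import Mathlib

/-!
`R` is the homogeneous coordinate ring of the four points `[1 : ±1 : ±1]` of `ℙ²`. Evaluating
`B Φ_t⁺ = Φ_t⁺ A` at three of them gives three equations `B (2 M) = (2 M) A` over `k` with rank-one
matrices `M`; after dividing by `2`, these force `A` and `B` to be the same scalar matrix as soon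
as `t ≠ 0`.
-/

open MvPolynomial

noncomputable section

variable (k : Type) [Field k]

/-- The ideal `(x² - y², y² - z²)` of `S = k[x,y,z]`. -/
def fourPtsIdeal : Ideal (MvPolynomial (Fin 3) k) :=
  Ideal.span {(X 0 : MvPolynomial (Fin 3) k) ^ 2 - X 1 ^ 2,
              (X 1 : MvPolynomial (Fin 3) k) ^ 2 - X 2 ^ 2}

/-- `R = k[x,y,z]/(x² - y², y² - z²)`. -/
def Rring := MvPolynomial (Fin 3) k ⧸ fourPtsIdeal k

instance : CommRing (Rring k) := Ideal.Quotient.commRing _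
instance : Algebra k (Rring k) := Ideal.Quotient.algebra k

/-- `Φ_t⁺ = [[t₁(x+y), y+z], [t₀(z-y), x-y]]` as a matrix over `R`. -/
def PhiPlusR (t₀ t₁ : k) : Matrix (Fin 2) (Fin 2) (Rring k) :=
  (!![C t₁ * (X 0 + X 1), X 1 + X 2;
      C t₀ * (X 2 - X 1), X 0 - X 1]).map (Ideal.Quotient.mk (fourPtsIdeal k))

namespace Matrix

theorem mul_eq_mul_of_mul_smul_eq_smul_mul {K : Type*} [Field K] {n : Type*} [Fintype n]
    {c : K} (hc : c ≠ 0) {A B M : Matrix n n K} (h : B * (c • M) = (c • M) * A) :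
    B * M = M * A :=
  smul_right_injective _ hc (by simpa only [Matrix.mul_smul, Matrix.smul_mul] using h)

theorem exists_eq_smul_one_of_intertwine {R : Type*} [CommRing R] [NoZeroDivisors R]
    {t₀ t₁ : R} (ht : ¬(t₀ = 0 ∧ t₁ = 0)) {A B : Matrix (Fin 2) (Fin 2) R}
    (h₁ : B * !![t₁, 1; 0, 0] = !![t₁, 1; 0, 0] * A)
    (h₂ : B * !![0, 0; t₀, 1] = !![0, 0; t₀, 1] * A)
    (h₃ : B * !![0, -1; 0, 1] = !![0, -1; 0, 1] * A) :
    ∃ c : R, A = c • 1 ∧ B = c • 1 := by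
  have cancel (x : R) (h₀ : t₀ * x = 0) (h₁ : t₁ * x = 0) : x = 0 := by
    by_contra hx
    exact ht ⟨(mul_eq_zero.1 h₀).resolve_right hx, (mul_eq_zero.1 h₁).resolve_right hx⟩
  rw [eta_fin_two A, eta_fin_two B] at *
  simp only [mul_fin_two, EmbeddingLike.apply_eq_iff_eq, vecCons_inj, and_true]
    at h₁ h₂ h₃
  obtain ⟨⟨h₁₀₀, h₁₀₁⟩, -, h₁₁₁⟩ := h₁
  obtain ⟨⟨-, h₂₀₁⟩, h₂₁₀, h₂₁₁⟩ := h₂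
  obtain ⟨⟨h₃₀₀, h₃₀₁⟩, -, h₃₁₁⟩ := h₃
  have hB₁₀ : B 1 0 = 0 := by linear_combination h₁₁₁
  have hB₀₁ : B 0 1 = 0 := by linear_combination h₂₀₁
  have hA₁₀ : A 1 0 = 0 := by linear_combination h₃₀₀
  have hB₀₀ : B 0 0 = A 1 1 := by linear_combination hB₀₁ - h₃₀₁
  have hB₁₁ : B 1 1 = A 1 1 := by linear_combination h₃₁₁ + hB₁₀
  have hA₀₁ : A 0 1 = 0 :=
    cancel _ (by linear_combination hB₁₁ - h₂₁₁) (by linear_combination hB₀₀ - h₁₀₁)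
  have hA₀₀ : A 0 0 = A 1 1 := sub_eq_zero.1 <| cancel _
    (by linear_combination t₀ * hB₁₁ - h₂₁₀ - hA₁₀) (by linear_combination t₁ * hB₀₀ - h₁₀₀ - hA₁₀)
  refine ⟨A 1 1, ?_, ?_⟩ <;> ext i j <;> fin_cases i <;> fin_cases j <;>
    simp [hA₀₀, hA₀₁, hA₁₀, hB₀₀, hB₀₁, hB₁₀, hB₁₁]

end Matrix

namespace Rring

variable {k}

def eval (p : Fin 3 → k) (hxy : p 0 ^ 2 = p 1 ^ 2) (hyz : p 1 ^ 2 = p 2 ^ 2) :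
    Rring k →ₐ[k] k :=
  Ideal.Quotient.liftₐ (fourPtsIdeal k) (aeval p) fun a ha => by
    rw [fourPtsIdeal, Ideal.mem_span_pair] at ha
    obtain ⟨u, v, rfl⟩ := ha
    simp [hxy, hyz]

theorem eval_mk (p : Fin 3 → k) (hxy : p 0 ^ 2 = p 1 ^ 2) (hyz : p 1 ^ 2 = p 2 ^ 2)
    (q : MvPolynomial (Fin 3) k) :
    eval p hxy hyz (Ideal.Quotient.mk (fourPtsIdeal k) q) = aeval p q :=
  Ideal.Quotient.lift_mk _ _ _

theorem map_eval_PhiPlusR (t₀ t₁ : k) (p : Fin 3 → k) (hxy : p 0 ^ 2 = p 1 ^ 2)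
    (hyz : p 1 ^ 2 = p 2 ^ 2) :
    (PhiPlusR k t₀ t₁).map (eval p hxy hyz) =
      !![t₁ * (p 0 + p 1), p 1 + p 2; t₀ * (p 2 - p 1), p 0 - p 1] := by
  ext i j
  fin_cases i <;> fin_cases j <;> exact (eval_mk p hxy hyz _).trans (by simp)

theorem intertwines_map_eval {t₀ t₁ : k} {A B : Matrix (Fin 2) (Fin 2) k}
    (h : B.map (algebraMap k (Rring k)) * PhiPlusR k t₀ t₁ =
      PhiPlusR k t₀ t₁ * A.map (algebraMap k (Rring k)))
    (p : Fin 3 → k) (hxy : p 0 ^ 2 = p 1 ^ 2) (hyz : p 1 ^ 2 = p 2 ^ 2) :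
    B * !![t₁ * (p 0 + p 1), p 1 + p 2; t₀ * (p 2 - p 1), p 0 - p 1] =
      !![t₁ * (p 0 + p 1), p 1 + p 2; t₀ * (p 2 - p 1), p 0 - p 1] * A := by
  have hscalar (M : Matrix (Fin 2) (Fin 2) k) :
      (M.map (algebraMap k (Rring k))).map (eval p hxy hyz) = M := by
    ext; simp
  have := congrArg (eval p hxy hyz).mapMatrix h
  simpa only [map_mul, AlgHom.mapMatrix_apply, hscalar, map_eval_PhiPlusR] using this

theorem intertwines_rankOne_of_intertwines_PhiPlusR (hchar : (2 : k) ≠ 0) {t₀ t₁ : k}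
    {A B : Matrix (Fin 2) (Fin 2) k}
    (h : B.map (algebraMap k (Rring k)) * PhiPlusR k t₀ t₁ =
      PhiPlusR k t₀ t₁ * A.map (algebraMap k (Rring k))) :
    B * !![t₁, 1; 0, 0] = !![t₁, 1; 0, 0] * A ∧
    B * !![0, 0; t₀, 1] = !![0, 0; t₀, 1] * A ∧
    B * !![0, -1; 0, 1] = !![0, -1; 0, 1] * A := by
  have at_point (p : Fin 3 → k) (hxy : p 0 ^ 2 = p 1 ^ 2) (hyz : p 1 ^ 2 = p 2 ^ 2)
      (M : Matrix (Fin 2) (Fin 2) k)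
      (hM : !![t₁ * (p 0 + p 1), p 1 + p 2; t₀ * (p 2 - p 1), p 0 - p 1] = (2 : k) • M) :
      B * M = M * A :=
    Matrix.mul_eq_mul_of_mul_smul_eq_smul_mul hchar (hM ▸ intertwines_map_eval h p hxy hyz)
  refine ⟨at_point ![1, 1, 1] rfl rfl _ ?_, at_point ![1, -1, 1] ?_ ?_ _ ?_,
    at_point ![1, -1, -1] ?_ rfl _ ?_⟩ <;>
    simp <;> norm_num [mul_comm]

end Rring

/-- for `char k ≠ 2` and `t = (t₀,t₁) ≠ 0`, if scalar `2×2` matrices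
`A, B` over `k` satisfy `B · Φ_t⁺ = Φ_t⁺ · A` over `R`, then `A = B = c·I₂` for some
`c ∈ k`.  (Hence `End_{gr R}(N_t) = k` and `N_t = coker Φ_t⁺` is indecomposable.) -/
theorem stmt_4 (hchar : (2 : k) ≠ 0) (t₀ t₁ : k) (ht : ¬(t₀ = 0 ∧ t₁ = 0))
    (A B : Matrix (Fin 2) (Fin 2) k)
    (h : (B.map (algebraMap k (Rring k))) * PhiPlusR k t₀ t₁ =
         PhiPlusR k t₀ t₁ * (A.map (algebraMap k (Rring k)))) :
    ∃ c : k, A = c • (1 : Matrix (Fin 2) (Fin 2) k) ∧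
             B = c • (1 : Matrix (Fin 2) (Fin 2) k) := by
  obtain ⟨h₁, h₂, h₃⟩ := Rring.intertwines_rankOne_of_intertwines_PhiPlusR hchar h
  exact Matrix.exists_eq_smul_one_of_intertwine ht h₁ h₂ h₃

end
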